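/- For H = G² with G the gnomonic map, the Maurer-Cartan forms satisfy H⁻¹dH = G⁻¹dG + G⁻¹(dG·G⁻¹)G, and the combination (1/2)(G dG⁻¹ + G⁻¹dG) + Ω⁻¹dΩ with Ω = (ℓ²+r²)/(4ℓ) contracts to zero against tⁱ∂ᵢ: Σᵢ tⁱ ι_{∂ᵢ}((1/2)(GdG⁻¹ + G⁻¹dG) + Ω⁻¹dΩ) = 0. -/

import Mathlib

open Complex Matrix

noncomputable def τ1 : Matrix (Fin 2) (Fin 2) ℂ := !![0, 1; 1, 0]
noncomputable def τ2 : Matrix (Fin 2) (Fin 2) ℂ := !![0, -Complex.I; Complex.I, 0]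
noncomputable def τ3 : Matrix (Fin 2) (Fin 2) ℂ := !![1, 0; 0, -1]

noncomputable def tgen : Fin 3 → Matrix (Fin 2) (Fin 2) ℂ :=
  ![(Complex.I / 2) • τ3, (-(1 : ℂ) / 2) • τ2, ((1 : ℂ) / 2) • τ1]

/-- tⁱ with index raised by η = diag(1,-1,-1): t⁰ = t₀, tⁱ = -tᵢ for i = 1,2. -/
noncomputable def tup : Fin 3 → Matrix (Fin 2) (Fin 2) ℂ :=
  ![(Complex.I / 2) • τ3, -((-(1 : ℂ) / 2) • τ2), -(((1 : ℂ) / 2) • τ1)]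

noncomputable def xdott (x : Fin 3 → ℝ) : Matrix (Fin 2) (Fin 2) ℂ :=
  ∑ i, ((x i : ℝ) : ℂ) • tgen i

def r2 (x : Fin 3 → ℝ) : ℝ := x 0 ^ 2 - x 1 ^ 2 - x 2 ^ 2

noncomputable def Gmap (ℓ : ℝ) (x : Fin 3 → ℝ) : Matrix (Fin 2) (Fin 2) ℂ :=
  (((1 / Real.sqrt (ℓ ^ 2 + r2 x) : ℝ) : ℂ)) • ((ℓ : ℂ) • (1 : Matrix (Fin 2) (Fin 2) ℂ) +
    (2 : ℂ) • xdott x)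

noncomputable def Hmap (ℓ : ℝ) (x : Fin 3 → ℝ) : Matrix (Fin 2) (Fin 2) ℂ :=
  (((1 / (ℓ ^ 2 + r2 x) : ℝ) : ℂ)) • (((ℓ ^ 2 - r2 x : ℝ) : ℂ) • (1 : Matrix (Fin 2) (Fin 2) ℂ) +
    ((4 * ℓ : ℝ) : ℂ) • xdott x)

noncomputable def mderiv3 (F : (Fin 3 → ℝ) → Matrix (Fin 2) (Fin 2) ℂ)
    (x v : Fin 3 → ℝ) : Matrix (Fin 2) (Fin 2) ℂ :=
  Matrix.of fun i j => fderiv ℝ (fun y => F y i j) x v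

/-- The conformal factor Ω = (ℓ²+r²)/(4ℓ). -/
noncomputable def Ωmap (ℓ : ℝ) (x : Fin 3 → ℝ) : ℝ := (ℓ ^ 2 + r2 x) / (4 * ℓ)

/-! ### Auxiliary lemmas -/

noncomputable def pj (k : Fin 3) : (Fin 3 → ℝ) →L[ℝ] ℝ := ContinuousLinearMap.proj k
@[simp] lemma pj_apply (k : Fin 3) (v : Fin 3 → ℝ) : pj k v = v k := rfl

lemma key (ℓ : ℝ) (x : Fin 3 → ℝ) (hq : 0 < ℓ ^ 2 + r2 x) (e : ℂ) (b : Fin 3 → ℂ) :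
    ∃ D : (Fin 3 → ℝ) →L[ℝ] ℂ,
      HasFDerivAt (fun y : Fin 3 → ℝ => (((1 / Real.sqrt (ℓ ^ 2 + r2 y) : ℝ) : ℂ)) *
          (e + ∑ k, ((y k : ℝ) : ℂ) * b k)) D x ∧
      ∀ v : Fin 3 → ℝ, D v =
        (((-(2 * (x 0 * v 0 - x 1 * v 1 - x 2 * v 2)) /
            (2 * Real.sqrt (ℓ ^ 2 + r2 x) ^ 3) : ℝ) : ℂ)) * (e + ∑ k, ((x k : ℝ) : ℂ) * b k) +
        (((1 / Real.sqrt (ℓ ^ 2 + r2 x) : ℝ) : ℂ)) * (∑ k, ((v k : ℝ) : ℂ) * b k) := by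
  have hu0 : 0 < Real.sqrt (ℓ ^ 2 + r2 x) := Real.sqrt_pos.mpr hq
  have hp : ∀ k : Fin 3, HasFDerivAt (fun y : Fin 3 → ℝ => y k) (pj k) x := fun k =>
    (pj k).hasFDerivAt
  have hQ : HasFDerivAt (fun y : Fin 3 → ℝ => ℓ ^ 2 + r2 y)
      ((x 0 • pj 0 + x 0 • pj 0 - (x 1 • pj 1 + x 1 • pj 1)) -
        (x 2 • pj 2 + x 2 • pj 2)) x := by
    simp only [r2, pow_two]
    exact ((((hp 0).mul (hp 0)).sub ((hp 1).mul (hp 1))).sub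
      ((hp 2).mul (hp 2))).const_add _
  simp only [one_div]
  have hphi := (Real.hasDerivAt_sqrt hq.ne').inv hu0.ne'
  have hc := hphi.comp_hasFDerivAt x hQ
  have hcC := Complex.ofRealCLM.hasFDerivAt.comp x hc
  have hlin : HasFDerivAt (fun y : Fin 3 → ℝ => e + ∑ k, ((y k : ℝ) : ℂ) * b k)
      (∑ k, (b k) • (Complex.ofRealCLM.comp (pj k))) x :=
    (HasFDerivAt.fun_sum fun k _ =>
      (Complex.ofRealCLM.hasFDerivAt.comp x (hp k)).mul_const (b k)).const_add _
  refine ⟨_, hcC.mul hlin, fun v => ?_⟩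
  simp only [ContinuousLinearMap.add_apply, ContinuousLinearMap.coe_smul', Pi.smul_apply, Pi.inv_apply,
    ContinuousLinearMap.coe_comp', Function.comp_apply, ContinuousLinearMap.coe_sum',
    Finset.sum_apply, pj_apply, ContinuousLinearMap.sub_apply,
    Complex.ofRealCLM_apply, smul_eq_mul, Fin.sum_univ_three]
  push_cast
  field_simp
  ring

lemma smul_form_entry (ℓ : ℝ) (σ : ℂ) (y : Fin 3 → ℝ) (i j : Fin 2) :
    ((((1 / Real.sqrt (ℓ ^ 2 + r2 y) : ℝ) : ℂ)) • ((ℓ : ℂ) • (1 : Matrix (Fin 2) (Fin 2) ℂ) +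
      σ • ((2 : ℂ) • xdott y))) i j
    = (((1 / Real.sqrt (ℓ ^ 2 + r2 y) : ℝ) : ℂ)) *
      (((ℓ : ℂ) * (1 : Matrix (Fin 2) (Fin 2) ℂ) i j) +
        ∑ k, ((y k : ℝ) : ℂ) * (σ * (2 * tgen k i j))) := by
  simp only [xdott, Matrix.smul_apply, Matrix.add_apply, Matrix.sum_apply, smul_eq_mul,
    Finset.mul_sum]
  congr 2
  exact Finset.sum_congr rfl fun k _ => by ring

lemma diff_sigma (ℓ : ℝ) (σ : ℂ) (x : Fin 3 → ℝ) (hq : 0 < ℓ ^ 2 + r2 x) (i j : Fin 2) :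
    DifferentiableAt ℝ (fun y => ((((1 / Real.sqrt (ℓ ^ 2 + r2 y) : ℝ) : ℂ)) •
      ((ℓ : ℂ) • (1 : Matrix (Fin 2) (Fin 2) ℂ) + σ • ((2 : ℂ) • xdott y))) i j) x := by
  obtain ⟨D, hD, -⟩ := key ℓ x hq ((ℓ : ℂ) * (1 : Matrix (Fin 2) (Fin 2) ℂ) i j)
    (fun k => σ * (2 * tgen k i j))
  simp only [smul_form_entry]
  exact hD.differentiableAt

lemma mderiv_sigma (ℓ : ℝ) (σ : ℂ) (x v : Fin 3 → ℝ) (hq : 0 < ℓ ^ 2 + r2 x) :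
    mderiv3 (fun y => (((1 / Real.sqrt (ℓ ^ 2 + r2 y) : ℝ) : ℂ)) •
        ((ℓ : ℂ) • (1 : Matrix (Fin 2) (Fin 2) ℂ) + σ • ((2 : ℂ) • xdott y))) x v
    = (((-(2 * (x 0 * v 0 - x 1 * v 1 - x 2 * v 2)) /
        (2 * Real.sqrt (ℓ ^ 2 + r2 x) ^ 3) : ℝ) : ℂ)) •
        ((ℓ : ℂ) • (1 : Matrix (Fin 2) (Fin 2) ℂ) + σ • ((2 : ℂ) • xdott x)) +
      (((1 / Real.sqrt (ℓ ^ 2 + r2 x) : ℝ) : ℂ)) • (σ • ((2 : ℂ) • xdott v)) := by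
  ext i j
  show fderiv ℝ (fun y => ((((1 / Real.sqrt (ℓ ^ 2 + r2 y) : ℝ) : ℂ)) •
      ((ℓ : ℂ) • (1 : Matrix (Fin 2) (Fin 2) ℂ) + σ • ((2 : ℂ) • xdott y))) i j) x v = _
  obtain ⟨D, hD, hDv⟩ := key ℓ x hq ((ℓ : ℂ) * (1 : Matrix (Fin 2) (Fin 2) ℂ) i j)
    (fun k => σ * (2 * tgen k i j))
  simp only [smul_form_entry]
  rw [hD.fderiv, hDv v]
  simp only [Matrix.smul_apply, Matrix.add_apply, Matrix.sum_apply, xdott, smul_eq_mul,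
    Fin.sum_univ_three]
  ring

lemma mulAB (ℓ : ℝ) (y : Fin 3 → ℝ) :
    ((ℓ : ℂ) • (1 : Matrix (Fin 2) (Fin 2) ℂ) + (2 : ℂ) • xdott y) *
      ((ℓ : ℂ) • (1 : Matrix (Fin 2) (Fin 2) ℂ) - (2 : ℂ) • xdott y)
      = ((ℓ ^ 2 + r2 y : ℝ) : ℂ) • (1 : Matrix (Fin 2) (Fin 2) ℂ) := by
  ext i j
  fin_cases i <;> fin_cases j <;>
    simp [xdott, tgen, τ1, τ2, τ3, Matrix.mul_apply, Fin.sum_univ_three, Fin.sum_univ_two, r2,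
      Matrix.one_apply, Complex.ext_iff] <;>
    push_cast <;> ring_nf <;> simp [← Complex.ofReal_pow] <;> ring

lemma mulBA (ℓ : ℝ) (y : Fin 3 → ℝ) :
    ((ℓ : ℂ) • (1 : Matrix (Fin 2) (Fin 2) ℂ) - (2 : ℂ) • xdott y) *
      ((ℓ : ℂ) • (1 : Matrix (Fin 2) (Fin 2) ℂ) + (2 : ℂ) • xdott y)
      = ((ℓ ^ 2 + r2 y : ℝ) : ℂ) • (1 : Matrix (Fin 2) (Fin 2) ℂ) := by
  ext i j
  fin_cases i <;> fin_cases j <;>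
    simp [xdott, tgen, τ1, τ2, τ3, Matrix.mul_apply, Fin.sum_univ_three, Fin.sum_univ_two, r2,
      Matrix.one_apply, Complex.ext_iff] <;>
    push_cast <;> ring_nf <;> simp [← Complex.ofReal_pow] <;> ring

lemma mulAA (ℓ : ℝ) (y : Fin 3 → ℝ) :
    ((ℓ : ℂ) • (1 : Matrix (Fin 2) (Fin 2) ℂ) + (2 : ℂ) • xdott y) *
      ((ℓ : ℂ) • (1 : Matrix (Fin 2) (Fin 2) ℂ) + (2 : ℂ) • xdott y)
      = ((ℓ ^ 2 - r2 y : ℝ) : ℂ) • (1 : Matrix (Fin 2) (Fin 2) ℂ) +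
        ((4 * ℓ : ℝ) : ℂ) • xdott y := by
  ext i j
  fin_cases i <;> fin_cases j <;>
    simp [xdott, tgen, τ1, τ2, τ3, Matrix.mul_apply, Fin.sum_univ_three, Fin.sum_univ_two, r2,
      Matrix.one_apply, Complex.ext_iff] <;>
    push_cast <;> ring_nf <;> simp [← Complex.ofReal_pow] <;> ring

lemma csq (q : ℝ) (hq : 0 < q) : (1 / Real.sqrt q) * (1 / Real.sqrt q) = 1 / q := by
  rw [div_mul_div_comm, one_mul, Real.mul_self_sqrt hq.le]

lemma Gmap_inv (ℓ : ℝ) (x : Fin 3 → ℝ) (hq : 0 < ℓ ^ 2 + r2 x) :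
    (Gmap ℓ x)⁻¹ = (((1 / Real.sqrt (ℓ ^ 2 + r2 x) : ℝ) : ℂ)) •
      ((ℓ : ℂ) • (1 : Matrix (Fin 2) (Fin 2) ℂ) - (2 : ℂ) • xdott x) := by
  apply Matrix.inv_eq_right_inv
  rw [Gmap, Matrix.smul_mul, Matrix.mul_smul, mulAB, smul_smul, smul_smul]
  rw [← Complex.ofReal_mul, ← Complex.ofReal_mul, csq _ hq]
  rw [one_div_mul_cancel hq.ne', Complex.ofReal_one, one_smul]

lemma Gmap_mul_right_inv (ℓ : ℝ) (x : Fin 3 → ℝ) (hq : 0 < ℓ ^ 2 + r2 x) :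
    Gmap ℓ x * (Gmap ℓ x)⁻¹ = 1 := by
  rw [Gmap_inv ℓ x hq, Gmap, Matrix.smul_mul, Matrix.mul_smul, mulAB, smul_smul, smul_smul]
  rw [← Complex.ofReal_mul, ← Complex.ofReal_mul, csq _ hq]
  rw [one_div_mul_cancel hq.ne', Complex.ofReal_one, one_smul]

lemma Gmap_inv_mul (ℓ : ℝ) (x : Fin 3 → ℝ) (hq : 0 < ℓ ^ 2 + r2 x) :
    (Gmap ℓ x)⁻¹ * Gmap ℓ x = 1 :=
  mul_eq_one_comm.mp (Gmap_mul_right_inv ℓ x hq)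

lemma Hmap_eq_sq (ℓ : ℝ) (y : Fin 3 → ℝ) (hq : 0 < ℓ ^ 2 + r2 y) :
    Hmap ℓ y = Gmap ℓ y * Gmap ℓ y := by
  rw [Gmap, Matrix.smul_mul, Matrix.mul_smul, mulAA, smul_smul, Hmap]
  rw [← Complex.ofReal_mul, csq _ hq]

lemma nhds_mem (ℓ : ℝ) (x : Fin 3 → ℝ) (hq : 0 < ℓ ^ 2 + r2 x) :
    {y : Fin 3 → ℝ | 0 < ℓ ^ 2 + r2 y} ∈ nhds x := by
  have hcont : Continuous fun y : Fin 3 → ℝ => ℓ ^ 2 + r2 y := by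
    unfold r2; fun_prop
  exact (isOpen_lt continuous_const hcont).mem_nhds hq

lemma mderiv3_congr {F K : (Fin 3 → ℝ) → Matrix (Fin 2) (Fin 2) ℂ} {x : Fin 3 → ℝ}
    (h : F =ᶠ[nhds x] K) (v : Fin 3 → ℝ) : mderiv3 F x v = mderiv3 K x v := by
  ext i j
  show fderiv ℝ (fun y => F y i j) x v = fderiv ℝ (fun y => K y i j) x v
  have h' : (fun y => F y i j) =ᶠ[nhds x] fun y => K y i j :=
    h.mono fun y hy => by simp only []; rw [hy]
  rw [h'.fderiv_eq]

lemma mderiv3_mul (F K : (Fin 3 → ℝ) → Matrix (Fin 2) (Fin 2) ℂ) (x v : Fin 3 → ℝ)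
    (hF : ∀ i j, DifferentiableAt ℝ (fun y => F y i j) x)
    (hK : ∀ i j, DifferentiableAt ℝ (fun y => K y i j) x) :
    mderiv3 (fun y => F y * K y) x v = mderiv3 F x v * K x + F x * mderiv3 K x v := by
  ext i j
  show fderiv ℝ (fun y => (F y * K y) i j) x v = _
  have hfun : (fun y => (F y * K y) i j) = fun y => ∑ k, F y i k * K y k j := by
    funext y; simp [Matrix.mul_apply]
  rw [hfun, fderiv_fun_sum (A := fun k y => F y i k * K y k j) fun k _ => ((hF i k).mul (hK k j))]
  simp only [ContinuousLinearMap.coe_sum', Finset.sum_apply]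
  rw [Matrix.add_apply, Matrix.mul_apply, Matrix.mul_apply, ← Finset.sum_add_distrib]
  refine Finset.sum_congr rfl fun k _ => ?_
  rw [fderiv_fun_mul (hF i k) (hK k j)]
  simp only [ContinuousLinearMap.add_apply, ContinuousLinearMap.coe_smul', Pi.smul_apply,
    smul_eq_mul, mderiv3, Matrix.of_apply]
  ring

lemma Gmap_fun (ℓ : ℝ) : Gmap ℓ = fun y => (((1 / Real.sqrt (ℓ ^ 2 + r2 y) : ℝ) : ℂ)) •
    ((ℓ : ℂ) • (1 : Matrix (Fin 2) (Fin 2) ℂ) + (1 : ℂ) • ((2 : ℂ) • xdott y)) := by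
  funext y
  rw [Gmap, one_smul]

lemma Gmap_diff (ℓ : ℝ) (x : Fin 3 → ℝ) (hq : 0 < ℓ ^ 2 + r2 x) (i j : Fin 2) :
    DifferentiableAt ℝ (fun y => Gmap ℓ y i j) x := by
  rw [Gmap_fun]
  exact diff_sigma ℓ 1 x hq i j

lemma mderiv_G (ℓ : ℝ) (x v : Fin 3 → ℝ) (hq : 0 < ℓ ^ 2 + r2 x) :
    mderiv3 (Gmap ℓ) x v
    = (((-(2 * (x 0 * v 0 - x 1 * v 1 - x 2 * v 2)) /
        (2 * Real.sqrt (ℓ ^ 2 + r2 x) ^ 3) : ℝ) : ℂ)) •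
        ((ℓ : ℂ) • (1 : Matrix (Fin 2) (Fin 2) ℂ) + (2 : ℂ) • xdott x) +
      (((1 / Real.sqrt (ℓ ^ 2 + r2 x) : ℝ) : ℂ)) • ((2 : ℂ) • xdott v) := by
  rw [Gmap_fun, mderiv_sigma ℓ 1 x v hq, one_smul, one_smul]

lemma Ginv_fun (ℓ : ℝ) (x : Fin 3 → ℝ) (hq : 0 < ℓ ^ 2 + r2 x) :
    (fun y => (Gmap ℓ y)⁻¹) =ᶠ[nhds x] fun y => (((1 / Real.sqrt (ℓ ^ 2 + r2 y) : ℝ) : ℂ)) •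
      ((ℓ : ℂ) • (1 : Matrix (Fin 2) (Fin 2) ℂ) + (-1 : ℂ) • ((2 : ℂ) • xdott y)) := by
  refine Filter.eventuallyEq_of_mem (nhds_mem ℓ x hq) fun y hy => ?_
  have : 0 < ℓ ^ 2 + r2 y := hy
  rw [Gmap_inv ℓ y this, neg_one_smul, sub_eq_add_neg]

lemma mderiv_Ginv (ℓ : ℝ) (x v : Fin 3 → ℝ) (hq : 0 < ℓ ^ 2 + r2 x) :
    mderiv3 (fun y => (Gmap ℓ y)⁻¹) x v
    = (((-(2 * (x 0 * v 0 - x 1 * v 1 - x 2 * v 2)) /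
        (2 * Real.sqrt (ℓ ^ 2 + r2 x) ^ 3) : ℝ) : ℂ)) •
        ((ℓ : ℂ) • (1 : Matrix (Fin 2) (Fin 2) ℂ) - (2 : ℂ) • xdott x) +
      (((1 / Real.sqrt (ℓ ^ 2 + r2 x) : ℝ) : ℂ)) • (-((2 : ℂ) • xdott v)) := by
  rw [mderiv3_congr (Ginv_fun ℓ x hq) v, mderiv_sigma ℓ (-1) x v hq, neg_one_smul,
    neg_one_smul, sub_eq_add_neg]
  rfl

lemma part1 (ℓ : ℝ) (x : Fin 3 → ℝ) (hq : 0 < ℓ ^ 2 + r2 x) (v : Fin 3 → ℝ) :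
    (Hmap ℓ x)⁻¹ * mderiv3 (Hmap ℓ) x v =
      (Gmap ℓ x)⁻¹ * mderiv3 (Gmap ℓ) x v +
        (Gmap ℓ x)⁻¹ * ((Gmap ℓ x)⁻¹ * mderiv3 (Gmap ℓ) x v) * Gmap ℓ x := by
  have hev : Hmap ℓ =ᶠ[nhds x] fun y => Gmap ℓ y * Gmap ℓ y :=
    Filter.eventuallyEq_of_mem (nhds_mem ℓ x hq) fun y hy => Hmap_eq_sq ℓ y hy
  have hdH : mderiv3 (Hmap ℓ) x v
      = mderiv3 (Gmap ℓ) x v * Gmap ℓ x + Gmap ℓ x * mderiv3 (Gmap ℓ) x v := by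
    rw [mderiv3_congr hev v, mderiv3_mul (Gmap ℓ) (Gmap ℓ) x v (Gmap_diff ℓ x hq)
      (Gmap_diff ℓ x hq)]
  rw [hdH, Hmap_eq_sq ℓ x hq, Matrix.mul_inv_rev]
  set B := (Gmap ℓ x)⁻¹
  set A := Gmap ℓ x
  set dA := mderiv3 (Gmap ℓ) x v
  have hBA : B * A = 1 := Gmap_inv_mul ℓ x hq
  rw [Matrix.mul_add]
  have h1 : B * B * (dA * A) = B * (B * dA) * A := by
    simp only [Matrix.mul_assoc]
  have h2 : B * B * (A * dA) = B * dA := by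
    rw [Matrix.mul_assoc B B (A * dA), ← Matrix.mul_assoc B A dA, hBA, Matrix.one_mul]
  rw [h1, h2, add_comm]

lemma Omega_ratio (ℓ : ℝ) (hl : 0 < ℓ) (x v : Fin 3 → ℝ) (hq : 0 < ℓ ^ 2 + r2 x) :
    fderiv ℝ (Ωmap ℓ) x v / Ωmap ℓ x
      = 2 * (x 0 * v 0 - x 1 * v 1 - x 2 * v 2) / (ℓ ^ 2 + r2 x) := by
  have hp : ∀ k : Fin 3, HasFDerivAt (fun y : Fin 3 → ℝ => y k) (pj k) x := fun k =>
    (pj k).hasFDerivAt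
  have hQ : HasFDerivAt (fun y : Fin 3 → ℝ => ℓ ^ 2 + r2 y)
      ((x 0 • pj 0 + x 0 • pj 0 - (x 1 • pj 1 + x 1 • pj 1)) -
        (x 2 • pj 2 + x 2 • pj 2)) x := by
    simp only [r2, pow_two]
    exact ((((hp 0).mul (hp 0)).sub ((hp 1).mul (hp 1))).sub
      ((hp 2).mul (hp 2))).const_add _
  have hO := hQ.mul_const (4 * ℓ)⁻¹
  rw [show Ωmap ℓ = fun y => (ℓ ^ 2 + r2 y) * (4 * ℓ)⁻¹ from funext fun y =>
    div_eq_mul_inv _ _, hO.fderiv]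
  simp only [ContinuousLinearMap.coe_smul', Pi.smul_apply, ContinuousLinearMap.sub_apply,
    ContinuousLinearMap.add_apply, pj_apply, smul_eq_mul]
  field_simp
  ring

lemma sqrt_cube_mul (q dq : ℝ) (hq : 0 < q) :
    (1 / Real.sqrt q) * (-dq / (2 * Real.sqrt q ^ 3)) = -dq / (2 * q ^ 2) := by
  have h2 : Real.sqrt q ^ 2 = q := Real.sq_sqrt hq.le
  have h0 : Real.sqrt q ≠ 0 := (Real.sqrt_pos.mpr hq).ne'
  have h4 : Real.sqrt q ^ 4 = q ^ 2 := by
    calc Real.sqrt q ^ 4 = (Real.sqrt q ^ 2) ^ 2 := by ring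
    _ = q ^ 2 := by rw [h2]
  rw [div_mul_div_comm, one_mul]
  congr 1
  rw [← h4]
  ring

set_option maxHeartbeats 1000000 in
lemma combo (ℓ : ℝ) (hl : 0 < ℓ) (x v : Fin 3 → ℝ) (hq : 0 < ℓ ^ 2 + r2 x) :
    ((1 : ℂ) / 2) • (Gmap ℓ x * mderiv3 (fun y => (Gmap ℓ y)⁻¹) x v +
        (Gmap ℓ x)⁻¹ * mderiv3 (Gmap ℓ) x v) +
      ((fderiv ℝ (Ωmap ℓ) x v / Ωmap ℓ x : ℝ) : ℂ) • (1 : Matrix (Fin 2) (Fin 2) ℂ)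
    = (((x 0 * v 0 - x 1 * v 1 - x 2 * v 2) / (ℓ ^ 2 + r2 x) : ℝ) : ℂ) •
        (1 : Matrix (Fin 2) (Fin 2) ℂ) -
      ((4 / (ℓ ^ 2 + r2 x) : ℝ) : ℂ) • (xdott x * xdott v) := by
  have hu0 : Real.sqrt (ℓ ^ 2 + r2 x) ≠ 0 := (Real.sqrt_pos.mpr hq).ne'
  rw [mderiv_Ginv ℓ x v hq, mderiv_G ℓ x v hq, Gmap_inv ℓ x hq, Gmap, Omega_ratio ℓ hl x v hq]
  set M := xdott x with hM
  set T := xdott v with hT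
  set A := (ℓ : ℂ) • (1 : Matrix (Fin 2) (Fin 2) ℂ) + (2 : ℂ) • M with hA
  set B := (ℓ : ℂ) • (1 : Matrix (Fin 2) (Fin 2) ℂ) - (2 : ℂ) • M with hB
  have hab : A * B = ((ℓ ^ 2 + r2 x : ℝ) : ℂ) • (1 : Matrix (Fin 2) (Fin 2) ℂ) := mulAB ℓ x
  have hba : B * A = ((ℓ ^ 2 + r2 x : ℝ) : ℂ) • (1 : Matrix (Fin 2) (Fin 2) ℂ) := mulBA ℓ x
  have hAT : A * T = (ℓ : ℂ) • T + (2 : ℂ) • (M * T) := by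
    rw [hA, Matrix.add_mul, Matrix.smul_mul, Matrix.smul_mul, Matrix.one_mul]
  have hBT : B * T = (ℓ : ℂ) • T - (2 : ℂ) • (M * T) := by
    rw [hB, Matrix.sub_mul, Matrix.smul_mul, Matrix.smul_mul, Matrix.one_mul]
  simp only [Matrix.mul_add, Matrix.mul_smul, Matrix.smul_mul, smul_smul, Matrix.mul_neg,
    smul_neg, ← Complex.ofReal_mul]
  have s1c : ((-(2 * (x 0 * v 0 - x 1 * v 1 - x 2 * v 2)) /
      (2 * Real.sqrt (ℓ ^ 2 + r2 x) ^ 3) * (1 / Real.sqrt (ℓ ^ 2 + r2 x)) : ℝ) : ℂ)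
      = ((-(2 * (x 0 * v 0 - x 1 * v 1 - x 2 * v 2)) / (2 * (ℓ ^ 2 + r2 x) ^ 2) : ℝ) : ℂ) :=
    congrArg _ (by rw [mul_comm]; exact sqrt_cube_mul _ _ hq)
  have h2c : (((1 / Real.sqrt (ℓ ^ 2 + r2 x) : ℝ) : ℂ) * 2 *
      ((1 / Real.sqrt (ℓ ^ 2 + r2 x) : ℝ) : ℂ)) = 2 * (((1 / (ℓ ^ 2 + r2 x) : ℝ) : ℂ)) := by
    rw [show (((1 / Real.sqrt (ℓ ^ 2 + r2 x) : ℝ) : ℂ)) * 2 *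
      (((1 / Real.sqrt (ℓ ^ 2 + r2 x) : ℝ) : ℂ)) = 2 * ((((1 / Real.sqrt (ℓ ^ 2 + r2 x) : ℝ) : ℂ)) *
      (((1 / Real.sqrt (ℓ ^ 2 + r2 x) : ℝ) : ℂ))) from by ring, ← Complex.ofReal_mul, csq _ hq]
  rw [s1c, h2c, hab, hba, hAT, hBT]
  have hqc : (ℓ : ℂ) ^ 2 + ((r2 x : ℝ) : ℂ) ≠ 0 := by
    rw [← Complex.ofReal_pow, ← Complex.ofReal_add]
    exact Complex.ofReal_ne_zero.mpr hq.ne'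
  match_scalars <;> (push_cast; field_simp [hqc]; try ring)



lemma xdott_single (i : Fin 3) : xdott (Pi.single i 1) = tgen i := by
  fin_cases i <;>
    simp [xdott, Fin.sum_univ_three, Pi.single_apply]

lemma fierz (x : Fin 3 → ℝ) :
    ((x 0 : ℝ) : ℂ) • tup 0 + (-(x 1 : ℝ) : ℂ) • tup 1 + (-(x 2 : ℝ) : ℂ) • tup 2
      = (4 : ℂ) • (tup 0 * (xdott x * tgen 0) + tup 1 * (xdott x * tgen 1) +
          tup 2 * (xdott x * tgen 2)) := by
  ext i j
  fin_cases i <;> fin_cases j <;>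
    simp [tup, tgen, τ1, τ2, τ3, xdott, Matrix.mul_apply, Fin.sum_univ_three, Fin.sum_univ_two,
      Complex.ext_iff] <;>
    ring_nf <;> norm_num

set_option maxHeartbeats 1000000 in
/-- For H = G² (gnomonic map G): H⁻¹dH = G⁻¹dG + G⁻¹(dG·G⁻¹)G, and the combination
(1/2)(GdG⁻¹ + G⁻¹dG) + Ω⁻¹dΩ contracts to zero against tⁱ∂ᵢ:
Σᵢ tⁱ ι_{∂ᵢ}((1/2)(GdG⁻¹ + G⁻¹dG) + Ω⁻¹dΩ) = 0. -/
theorem stereographic_maurer_cartan_relations (ℓ : ℝ) (hℓ : 0 < ℓ) :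
    ∀ x : Fin 3 → ℝ, r2 x > -ℓ ^ 2 →
      (∀ v : Fin 3 → ℝ,
        (Hmap ℓ x)⁻¹ * mderiv3 (Hmap ℓ) x v =
          (Gmap ℓ x)⁻¹ * mderiv3 (Gmap ℓ) x v +
            (Gmap ℓ x)⁻¹ * ((Gmap ℓ x)⁻¹ * mderiv3 (Gmap ℓ) x v) * Gmap ℓ x) ∧
      (∑ i : Fin 3, tup i *
          (((1 : ℂ) / 2) • (Gmap ℓ x * mderiv3 (fun y => (Gmap ℓ y)⁻¹) x (Pi.single i 1) +
              (Gmap ℓ x)⁻¹ * mderiv3 (Gmap ℓ) x (Pi.single i 1)) +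
            ((fderiv ℝ (Ωmap ℓ) x (Pi.single i 1) / Ωmap ℓ x : ℝ) : ℂ) •
              (1 : Matrix (Fin 2) (Fin 2) ℂ)) = 0) := by
  intro x hx
  have hq : 0 < ℓ ^ 2 + r2 x := by
    have : -ℓ ^ 2 < r2 x := hx
    linarith
  have hqc : (ℓ : ℂ) ^ 2 + ((r2 x : ℝ) : ℂ) ≠ 0 := by
    rw [← Complex.ofReal_pow, ← Complex.ofReal_add]
    exact Complex.ofReal_ne_zero.mpr hq.ne'
  refine ⟨fun v => part1 ℓ x hq v, ?_⟩
  rw [Finset.sum_congr rfl fun i _ => by rw [combo ℓ hℓ x (Pi.single i 1) hq]]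
  simp only [xdott_single, Fin.sum_univ_three, Pi.single_eq_same, Pi.single_eq_of_ne, ne_eq, Fin.reduceEq, not_false_eq_true,
    Matrix.mul_sub, Matrix.mul_smul, Matrix.mul_one]
  rw [show (0 : Matrix (Fin 2) (Fin 2) ℂ)
      = ((ℓ : ℂ) ^ 2 + ((r2 x : ℝ) : ℂ))⁻¹ •
        (((x 0 : ℝ) : ℂ) • tup 0 + (-(x 1 : ℝ) : ℂ) • tup 1 + (-(x 2 : ℝ) : ℂ) • tup 2 -
          (4 : ℂ) • (tup 0 * (xdott x * tgen 0) + tup 1 * (xdott x * tgen 1) +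
            tup 2 * (xdott x * tgen 2))) from by
    rw [sub_eq_zero.mpr (fierz x), smul_zero]]
  match_scalars <;> (push_cast; field_simp [hqc]; try ring)
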